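/- Let q ∈ ℂ with 0 < |q| < 1 and x, y ∈ ℂ* generic. Then j(x;q)·j(y;q) = j(-xy;q²)·j(-q x⁻¹ y; q²) - x · j(-xyq; q²) · j(-x⁻¹ y; q²), where j(z;q) := (z;q)_∞(q/z;q)_∞(q;q)_∞. -/

import Mathlib

/-!
Write `θ_m(z) = q^{m(m-1)/2} (-z)^m`. By the Jacobi triple product, `j(z;q) = ∑_{m ∈ ℤ} θ_m(z)`.
It follows from Cauchy's finite `q`-binomial theorem
`∏_{k<n} (1 - z q^k) = ∑_j [n, j]_q (-1)^j q^{j(j-1)/2} z^j`: at `n = 2N`, `z = x q^{-N}` it gives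
`∏_{k<N} (1 - x q^k)(1 - q^{k+1}/x) = ∑_{|m| ≤ N} [2N, N+m]_q θ_m(x)`, and since the Gaussian
binomials stay bounded and tend to `1/(q;q)_∞`, Tannery's theorem passes to the limit `N → ∞`.

The splitting identity is then one about theta series. In `∑_{n,m} θ_n(x) θ_m(y)` write
`(n, m) = (a - b, a + b)` or `(a - b + 1, a + b)` according to the parity of `n + m`. The even part
factors termwise into the two theta series in `q²` at `-xy` and `-qy/x`, and since
`θ_{1+n}(x) = -x θ_n(xq)`, the odd part is `-x` times the even part at `(xq, y)`.
-/

noncomputable def qPoch (x q : ℂ) : ℂ := ∏' k : ℕ, (1 - x * q ^ k)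

noncomputable def jP (z q : ℂ) : ℂ := qPoch z q * qPoch (q / z) q * qPoch q q

open Finset Filter Topology

section qBinom

variable {R : Type*} [CommRing R]

def qBinom (q : R) : ℕ → ℕ → R
  | _, 0 => 1
  | 0, _ + 1 => 0
  | n + 1, k + 1 => qBinom q n k + q ^ (k + 1) * qBinom q n (k + 1)

def qFactorial (q : R) (n : ℕ) : R := ∏ k ∈ range n, (1 - q ^ (k + 1))

variable (q : R)

@[simp]
lemma qBinom_zero_right (n : ℕ) : qBinom q n 0 = 1 := by cases n <;> rfl

lemma qBinom_succ_succ (n k : ℕ) :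
    qBinom q (n + 1) (k + 1) = qBinom q n k + q ^ (k + 1) * qBinom q n (k + 1) := rfl

lemma qBinom_eq_zero_of_lt : ∀ {n k : ℕ}, n < k → qBinom q n k = 0
  | 0, _ + 1, _ => rfl
  | n + 1, k + 1, h => by
    rw [qBinom_succ_succ, qBinom_eq_zero_of_lt (by omega), qBinom_eq_zero_of_lt (by omega),
      mul_zero, add_zero]

@[simp]
lemma qBinom_self : ∀ n : ℕ, qBinom q n n = 1
  | 0 => rfl
  | n + 1 => by
    rw [qBinom_succ_succ, qBinom_self n, qBinom_eq_zero_of_lt q n.lt_succ_self, mul_zero, add_zero]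

lemma qBinom_mul_qFactorial_mul_qFactorial : ∀ {n k : ℕ}, k ≤ n →
    qBinom q n k * qFactorial q k * qFactorial q (n - k) = qFactorial q n
  | n, 0, _ => by simp [qFactorial]
  | 0, _ + 1, h => by omega
  | n + 1, k + 1, h => by
    rcases Nat.lt_or_eq_of_le (Nat.le_of_succ_le_succ h) with hk | rfl
    · obtain ⟨d, rfl⟩ : ∃ d, n = k + d + 1 := ⟨n - k - 1, by omega⟩
      have h1 := qBinom_mul_qFactorial_mul_qFactorial (n := k + d + 1) (k := k) (by omega)
      have h2 := qBinom_mul_qFactorial_mul_qFactorial (n := k + d + 1) (k := k + 1) (by omega)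
      rw [show k + d + 1 - k = d + 1 by omega] at h1
      rw [show k + d + 1 - (k + 1) = d by omega] at h2
      rw [show k + d + 1 + 1 - (k + 1) = d + 1 by omega, qBinom_succ_succ]
      simp only [qFactorial, prod_range_succ] at h1 h2 ⊢
      linear_combination (1 - q ^ (k + 1)) * h1 + q ^ (k + 1) * (1 - q ^ (d + 1)) * h2
    · simp [qFactorial]

theorem prod_one_sub_mul_pow_eq_sum (z : R) (n : ℕ) :
    ∏ k ∈ range n, (1 - z * q ^ k) =
      ∑ j ∈ range (n + 1), qBinom q n j * (-1) ^ j * q ^ j.choose 2 * z ^ j := by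
  induction n generalizing z with
  | zero => simp
  | succ n ih =>
    have hprod : ∏ k ∈ range (n + 1), (1 - z * q ^ k) =
        (1 - z) * ∏ k ∈ range n, (1 - z * q * q ^ k) := by
      rw [prod_range_succ', pow_zero, mul_one, mul_comm]
      simp only [pow_succ', mul_assoc]
    rw [hprod, ih]
    set g : ℕ → R := fun i => qBinom q n i * (-1) ^ i * q ^ i.choose 2 * (z * q) ^ i
    have hstep (j : ℕ) : qBinom q (n + 1) (j + 1) * (-1) ^ (j + 1) * q ^ (j + 1).choose 2 *
        z ^ (j + 1) = g (j + 1) - z * g j := by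
      simp only [g, qBinom_succ_succ, Nat.choose_succ_succ', Nat.choose_one_right]
      ring
    have hshift : ∑ j ∈ range (n + 1), g (j + 1) + 1 = ∑ j ∈ range (n + 1), g j := by
      have hg : g (n + 1) = 0 := by simp [g, qBinom_eq_zero_of_lt q n.lt_succ_self]
      have h0 : g 0 = 1 := by simp [g]
      rw [← h0, ← sum_range_succ', sum_range_succ, hg, add_zero]
    rw [sum_range_succ' _ (n + 1), sum_congr rfl fun j _ => hstep j, sum_sub_distrib, ← mul_sum]
    simp only [qBinom_zero_right, pow_zero, Nat.choose_zero_succ, mul_one]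
    linear_combination -hshift

end qBinom

lemma two_mul_mul_sub_one_ediv_two (m : ℤ) : 2 * (m * (m - 1) / 2) = m * (m - 1) :=
  Int.two_mul_ediv_two_of_even m.even_mul_pred_self

lemma add_mul_add_sub_one_ediv_two (m n : ℤ) :
    (m + n) * (m + n - 1) / 2 = m * (m - 1) / 2 + n * (n - 1) / 2 + m * n := by
  linarith [two_mul_mul_sub_one_ediv_two m, two_mul_mul_sub_one_ediv_two n,
    two_mul_mul_sub_one_ediv_two (m + n)]

lemma neg_mul_neg_sub_one_ediv_two (m : ℤ) : -m * (-m - 1) / 2 = m * (m - 1) / 2 + m := by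
  linarith [two_mul_mul_sub_one_ediv_two m, two_mul_mul_sub_one_ediv_two (-m)]

section thetaTerm

variable {K : Type*} [Field K]

lemma zpow_sub_mul_zpow_add {u v : K} (hu : u ≠ 0) (hv : v ≠ 0) (a b : ℤ) :
    u ^ (a - b) * v ^ (a + b) = (u * v) ^ a * (v / u) ^ b := by
  rw [zpow_sub₀ hu, zpow_add₀ hv, mul_zpow, div_zpow]
  ring

def thetaTerm (q z : K) (m : ℤ) : K := q ^ (m * (m - 1) / 2) * (-z) ^ m

variable {q z : K}

lemma thetaTerm_natCast (q z : K) (n : ℕ) :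
    thetaTerm q z n = (-1) ^ n * q ^ n.choose 2 * z ^ n := by
  have h : ((n : ℤ) * (n - 1) / 2) = (n.choose 2 : ℕ) := by
    rw [Nat.choose_two_right]
    rcases n with _ | k
    · rfl
    · push_cast [Nat.add_sub_cancel]; ring_nf
  rw [thetaTerm, h, zpow_natCast, zpow_natCast, neg_pow]
  ring

lemma thetaTerm_natCast_eq_prod (q z : K) (n : ℕ) :
    thetaTerm q z n = ∏ k ∈ range n, -(z * q ^ k) := by
  rw [thetaTerm_natCast, prod_neg, prod_mul_distrib, prod_const, card_range, prod_pow_eq_pow_sum,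
    sum_range_id, Nat.choose_two_right]
  ring

lemma thetaTerm_one (q z : K) : thetaTerm q z 1 = -z := by simp [thetaTerm]

lemma thetaTerm_add (hq : q ≠ 0) (hz : z ≠ 0) (m n : ℤ) :
    thetaTerm q z (m + n) = thetaTerm q z m * thetaTerm q (z * q ^ m) n := by
  simp only [thetaTerm, add_mul_add_sub_one_ediv_two, zpow_add₀ hq, zpow_add₀ (neg_ne_zero.2 hz),
    ← neg_mul, mul_zpow, ← zpow_mul]
  ring

lemma thetaTerm_neg (hq : q ≠ 0) (m : ℤ) : thetaTerm q z (-m) = thetaTerm q (q / z) m := by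
  rw [thetaTerm, thetaTerm, neg_mul_neg_sub_one_ediv_two, zpow_add₀ hq, zpow_neg, ← div_neg,
    div_zpow]
  ring

lemma thetaTerm_sub_mul_thetaTerm_add {x y : K} (hq : q ≠ 0) (hx : x ≠ 0) (hy : y ≠ 0)
    (a b : ℤ) :
    thetaTerm q x (a - b) * thetaTerm q y (a + b) =
      thetaTerm (q ^ 2) (-(x * y)) a * thetaTerm (q ^ 2) (-(q * x⁻¹ * y)) b := by
  have hT : (a - b) * (a - b - 1) / 2 + (a + b) * (a + b - 1) / 2 =
      2 * (a * (a - 1) / 2) + 2 * (b * (b - 1) / 2) + b := by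
    linarith [two_mul_mul_sub_one_ediv_two a, two_mul_mul_sub_one_ediv_two b,
      two_mul_mul_sub_one_ediv_two (a - b), two_mul_mul_sub_one_ediv_two (a + b)]
  have hq2 (k : ℤ) : (q ^ 2) ^ k = q ^ (2 * k) := by rw [zpow_mul]; norm_cast
  calc thetaTerm q x (a - b) * thetaTerm q y (a + b)
      = q ^ ((a - b) * (a - b - 1) / 2 + (a + b) * (a + b - 1) / 2) *
          ((-x) ^ (a - b) * (-y) ^ (a + b)) := by
        rw [thetaTerm, thetaTerm, zpow_add₀ hq]; ring
    _ = _ := by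
        rw [hT, zpow_sub_mul_zpow_add (neg_ne_zero.2 hx) (neg_ne_zero.2 hy), neg_mul_neg,
          neg_div_neg_eq, thetaTerm, thetaTerm, neg_neg, neg_neg, hq2, hq2, zpow_add₀ hq,
          zpow_add₀ hq]
        simp only [mul_zpow, div_zpow, inv_zpow]
        ring

theorem prod_range_eq_sum_Icc_qBinom_mul_thetaTerm {x : K} (hq : q ≠ 0) (hx : x ≠ 0) (N : ℕ) :
    ∏ k ∈ range N, ((1 - x * q ^ k) * (1 - q / x * q ^ k)) =
      ∑ m ∈ Icc (-N : ℤ) N, qBinom q (2 * N) (m + N).toNat * thetaTerm q x m := by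
  set w := x * q ^ (-(N : ℤ))
  have hw : w = x / q ^ N := by simp only [w, zpow_neg, zpow_natCast, div_eq_mul_inv]
  have hbinom : ∏ k ∈ range (2 * N), (1 - w * q ^ k) =
      ∑ j ∈ range (2 * N + 1), qBinom q (2 * N) j * thetaTerm q w j := by
    rw [prod_one_sub_mul_pow_eq_sum]
    exact sum_congr rfl fun j _ => by rw [thetaTerm_natCast]; ring
  have hshift (j : ℕ) : thetaTerm q x (-N) * thetaTerm q w j = thetaTerm q x ((j : ℤ) - N) := by
    rw [← thetaTerm_add hq hx, neg_add_eq_sub]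
  -- the factors `k < N` of `∏_{k<2N} (1 - w q^k)`, read backwards, are `1 - x / q^{k+1}`
  have hprod : thetaTerm q x (-N) * ∏ k ∈ range (2 * N), (1 - w * q ^ k) =
      ∏ k ∈ range N, ((1 - x * q ^ k) * (1 - q / x * q ^ k)) := by
    calc thetaTerm q x (-N) * ∏ k ∈ range (2 * N), (1 - w * q ^ k)
        = (∏ k ∈ range N, -(q / x * q ^ k)) * (∏ k ∈ range N, (1 - w * q ^ (N - 1 - k))) *
            ∏ k ∈ range N, (1 - w * q ^ (N + k)) := by
          rw [two_mul, prod_range_add, prod_range_reflect (fun k => 1 - w * q ^ k) N,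
            thetaTerm_neg hq, thetaTerm_natCast_eq_prod, mul_assoc]
      _ = ∏ k ∈ range N, ((1 - x * q ^ k) * (1 - q / x * q ^ k)) := by
          rw [← prod_mul_distrib, ← prod_mul_distrib]
          refine prod_congr rfl fun k hk => ?_
          have hN : q ^ N = q ^ (N - 1 - k) * q ^ (k + 1) := by
            rw [← pow_add]; congr 1; have := mem_range.1 hk; omega
          rw [mul_comm (1 - x * q ^ k), hw]
          congr 1
          · rw [hN]; field_simp; ring
          · rw [pow_add]; field_simp
  rw [← hprod, hbinom, mul_sum]
  refine sum_nbij' (fun j => (j : ℤ) - N) (fun m => (m + N).toNat) ?_ ?_ ?_ ?_ ?_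
  · intro j hj; simp only [mem_range, mem_Icc] at hj ⊢; omega
  · intro m hm; simp only [mem_range, mem_Icc] at hm ⊢; omega
  · intro j _; simp
  · intro m hm; simp only [mem_Icc] at hm; omega
  · intro j _
    simp only [sub_add_cancel, Int.toNat_natCast]
    rw [← hshift]
    ring

end thetaTerm

section Convergence

variable {q : ℂ}

lemma summable_norm_mul_pow (hq : ‖q‖ < 1) (z : ℂ) : Summable fun k : ℕ => ‖z * q ^ k‖ := by
  simpa [norm_pow] using (summable_geometric_of_lt_one (norm_nonneg q) hq).mul_left ‖z‖

lemma multipliable_one_sub_mul_pow (hq : ‖q‖ < 1) (z : ℂ) :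
    Multipliable fun k : ℕ => 1 - z * q ^ k := by
  simpa [sub_eq_add_neg] using multipliable_one_add_of_summable (f := fun k => -(z * q ^ k))
    (by simpa using summable_norm_mul_pow hq z)

lemma tendsto_prod_range_qPoch (hq : ‖q‖ < 1) (z : ℂ) :
    Tendsto (fun n => ∏ k ∈ range n, (1 - z * q ^ k)) atTop (𝓝 (qPoch z q)) :=
  (multipliable_one_sub_mul_pow hq z).hasProd.tendsto_prod_nat

lemma qPoch_ne_zero (hq : ‖q‖ < 1) {z : ℂ} (hz : ∀ k, z * q ^ k ≠ 1) : qPoch z q ≠ 0 := by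
  simpa [qPoch, sub_eq_add_neg] using tprod_one_add_ne_zero_of_summable
    (f := fun k => -(z * q ^ k)) (fun k => by rw [← sub_eq_add_neg, sub_ne_zero]; exact (hz k).symm)
    (by simpa using summable_norm_mul_pow hq z)

lemma pow_succ_ne_one_of_norm_lt_one (hq : ‖q‖ < 1) (k : ℕ) : q ^ (k + 1) ≠ 1 := by
  intro h
  have := congrArg norm h
  rw [norm_pow, norm_one] at this
  exact (pow_lt_one₀ (norm_nonneg q) hq k.succ_ne_zero).ne this

lemma qPoch_self_ne_zero (hq : ‖q‖ < 1) : qPoch q q ≠ 0 :=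
  qPoch_ne_zero hq fun k => by rw [← pow_succ']; exact pow_succ_ne_one_of_norm_lt_one hq k

lemma qFactorial_ne_zero (hq : ‖q‖ < 1) (n : ℕ) : qFactorial q n ≠ 0 :=
  prod_ne_zero_iff.2 fun k _ => sub_ne_zero.2 (pow_succ_ne_one_of_norm_lt_one hq k).symm

lemma tendsto_qFactorial (hq : ‖q‖ < 1) : Tendsto (qFactorial q) atTop (𝓝 (qPoch q q)) := by
  have h : qFactorial q = fun n => ∏ k ∈ range n, (1 - q * q ^ k) := by
    funext n; simp only [qFactorial, pow_succ']
  rw [h]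
  exact tendsto_prod_range_qPoch hq q

lemma qBinom_eq_mul_inv_mul_inv (hq : ‖q‖ < 1) {n k : ℕ} (h : k ≤ n) :
    qBinom q n k = qFactorial q n * (qFactorial q k)⁻¹ * (qFactorial q (n - k))⁻¹ := by
  rw [← qBinom_mul_qFactorial_mul_qFactorial q h]
  field_simp [qFactorial_ne_zero hq]

lemma exists_norm_qBinom_le (hq : ‖q‖ < 1) : ∃ B, ∀ n k, ‖qBinom q n k‖ ≤ B := by
  obtain ⟨C, hC⟩ := isBounded_iff_forall_norm_le.1
    (Metric.isBounded_range_of_tendsto _ (tendsto_qFactorial hq))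
  obtain ⟨D, hD⟩ := isBounded_iff_forall_norm_le.1 (Metric.isBounded_range_of_tendsto _
    ((tendsto_qFactorial hq).inv₀ (qPoch_self_ne_zero hq)))
  have hC0 : 0 ≤ C := (norm_nonneg _).trans (hC _ ⟨0, rfl⟩)
  have hD0 : 0 ≤ D := (norm_nonneg _).trans (hD _ ⟨0, rfl⟩)
  refine ⟨C * D * D, fun n k => ?_⟩
  rcases le_or_gt k n with h | h
  · rw [qBinom_eq_mul_inv_mul_inv hq h, norm_mul, norm_mul]
    gcongr
    exacts [hC _ ⟨n, rfl⟩, hD _ ⟨k, rfl⟩, hD _ ⟨n - k, rfl⟩]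
  · rw [qBinom_eq_zero_of_lt q h, norm_zero]
    positivity

lemma tendsto_qBinom_add (hq : ‖q‖ < 1) {a b : ℕ → ℕ} (ha : Tendsto a atTop atTop)
    (hb : Tendsto b atTop atTop) :
    Tendsto (fun N => qBinom q (a N + b N) (a N)) atTop (𝓝 (qPoch q q)⁻¹) := by
  have hF := tendsto_qFactorial hq
  have hP := qPoch_self_ne_zero hq
  have := ((hF.comp (ha.atTop_add_atTop hb)).mul ((hF.comp ha).inv₀ hP)).mul
    ((hF.comp hb).inv₀ hP)
  rw [mul_inv_cancel₀ hP, one_mul] at this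
  refine this.congr fun N => ?_
  simp [qBinom_eq_mul_inv_mul_inv hq (Nat.le_add_right (a N) (b N))]

lemma tendsto_qBinom_centered (hq : ‖q‖ < 1) (m : ℤ) :
    Tendsto (fun N : ℕ => qBinom q (2 * N) (m + N).toNat) atTop (𝓝 (qPoch q q)⁻¹) := by
  have ha : Tendsto (fun N : ℕ => (m + N).toNat) atTop atTop :=
    tendsto_atTop_atTop.2 fun b => ⟨b + m.natAbs, fun N hN => by omega⟩
  have hb : Tendsto (fun N : ℕ => (N - m).toNat) atTop atTop :=
    tendsto_atTop_atTop.2 fun b => ⟨b + m.natAbs, fun N hN => by omega⟩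
  refine (tendsto_qBinom_add hq ha hb).congr' ?_
  filter_upwards [eventually_ge_atTop m.natAbs] with N hN
  congr 1
  omega

lemma summable_norm_thetaTerm_natCast (hq0 : q ≠ 0) (hq : ‖q‖ < 1) {z : ℂ} (hz : z ≠ 0) :
    Summable fun n : ℕ => ‖thetaTerm q z n‖ := by
  have hne (m : ℤ) : thetaTerm q z m ≠ 0 :=
    mul_ne_zero (zpow_ne_zero _ hq0) (zpow_ne_zero _ (neg_ne_zero.2 hz))
  have hratio (n : ℕ) :
      ‖‖thetaTerm q z (n + 1 : ℕ)‖‖ / ‖‖thetaTerm q z n‖‖ = ‖z‖ * ‖q‖ ^ n := by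
    rw [norm_norm, norm_norm, Nat.cast_succ, thetaTerm_add hq0 hz, thetaTerm_one, norm_mul,
      norm_neg, norm_mul, zpow_natCast, norm_pow]
    field_simp [norm_ne_zero_iff.2 (hne n)]
  refine summable_of_ratio_test_tendsto_lt_one zero_lt_one
    (Eventually.of_forall fun n => norm_ne_zero_iff.2 (hne n)) ?_
  simp_rw [hratio]
  simpa using (tendsto_pow_atTop_nhds_zero_of_lt_one (norm_nonneg q) hq).const_mul ‖z‖

lemma summable_norm_thetaTerm (hq0 : q ≠ 0) (hq : ‖q‖ < 1) {z : ℂ} (hz : z ≠ 0) :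
    Summable fun m : ℤ => ‖thetaTerm q z m‖ :=
  .of_nat_of_neg (summable_norm_thetaTerm_natCast hq0 hq hz) <| by
    simpa only [thetaTerm_neg hq0] using
      summable_norm_thetaTerm_natCast hq0 hq (div_ne_zero hq0 hz)

end Convergence

noncomputable def qTheta (q z : ℂ) : ℂ := ∑' m : ℤ, thetaTerm q z m

theorem jP_eq_qTheta {q x : ℂ} (hq0 : q ≠ 0) (hq : ‖q‖ < 1) (hx : x ≠ 0) :
    jP x q = qTheta q x := by
  obtain ⟨B, hB⟩ := exists_norm_qBinom_le hq
  set F : ℕ → ℤ → ℂ := fun N => Set.indicator (Icc (-N : ℤ) N : Set ℤ) fun m =>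
    qBinom q (2 * N) (m + N).toNat * thetaTerm q x m
  have hpartial (N : ℕ) :
      ∑' m, F N m = ∏ k ∈ range N, ((1 - x * q ^ k) * (1 - q / x * q ^ k)) := by
    rw [prod_range_eq_sum_Icc_qBinom_mul_thetaTerm hq0 hx, sum_eq_tsum_indicator]
  have hlim (m : ℤ) : Tendsto (F · m) atTop (𝓝 ((qPoch q q)⁻¹ * thetaTerm q x m)) := by
    refine ((tendsto_qBinom_centered hq m).mul_const _).congr' ?_
    filter_upwards [eventually_ge_atTop m.natAbs] with N hN
    have hmem : m ∈ (Icc (-N : ℤ) N : Set ℤ) := by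
      simp only [coe_Icc, Set.mem_Icc]; omega
    simp only [F, Set.indicator_of_mem hmem]
  have hbound (N : ℕ) (m : ℤ) : ‖F N m‖ ≤ B * ‖thetaTerm q x m‖ := by
    refine (norm_indicator_le_norm_self _ _).trans ?_
    rw [norm_mul]
    exact mul_le_mul_of_nonneg_right (hB _ _) (norm_nonneg _)
  have hdom := tendsto_tsum_of_dominated_convergence
    ((summable_norm_thetaTerm hq0 hq hx).mul_left B) hlim (Eventually.of_forall hbound)
  have hprod : Tendsto (fun N => ∏ k ∈ range N, ((1 - x * q ^ k) * (1 - q / x * q ^ k))) atTop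
      (𝓝 (qPoch x q * qPoch (q / x) q)) := by
    simp_rw [prod_mul_distrib]
    exact (tendsto_prod_range_qPoch hq x).mul (tendsto_prod_range_qPoch hq (q / x))
  have hlimit := tendsto_nhds_unique hprod (hdom.congr hpartial)
  rw [tsum_mul_left] at hlimit
  rw [jP, qTheta, hlimit]
  field_simp [qPoch_self_ne_zero hq]

theorem tsum_int_prod_eq_tsum_add_tsum_parity {E : Type*} [NormedAddCommGroup E]
    [CompleteSpace E] {f : ℤ × ℤ → E} (hf : Summable f) :
    ∑' p, f p =
      ∑' p : ℤ × ℤ, f (p.1 - p.2, p.1 + p.2) + ∑' p : ℤ × ℤ, f (p.1 - p.2 + 1, p.1 + p.2) := by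
  let φ : (ℤ × ℤ) ⊕ (ℤ × ℤ) → ℤ × ℤ :=
    Sum.elim (fun p => (p.1 - p.2, p.1 + p.2)) (fun p => (p.1 - p.2 + 1, p.1 + p.2))
  have hφ : φ.Bijective := by
    constructor
    · rintro (⟨a, b⟩ | ⟨a, b⟩) (⟨c, d⟩ | ⟨c, d⟩) h <;> simp [φ] at h ⊢ <;> omega
    · rintro ⟨n, m⟩
      rcases Int.even_or_odd (n + m) with ⟨k, hk⟩ | ⟨k, hk⟩
      · exact ⟨.inl (k, k - n), by simp [φ]; omega⟩
      · exact ⟨.inr (k, m - k), by simp [φ]; omega⟩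
  let e := Equiv.ofBijective φ hφ
  have he : Summable (f ∘ e) := e.summable_iff.2 hf
  rw [← e.tsum_eq]
  change ∑' c, (f ∘ e) c = _
  rw [Summable.tsum_sum (he.comp_injective Sum.inl_injective)
    (he.comp_injective Sum.inr_injective)]
  rfl

section Splitting

variable {q x y : ℂ}

lemma norm_pow_two_lt_one (hq : ‖q‖ < 1) : ‖q ^ 2‖ < 1 := by
  rw [norm_pow]
  exact pow_lt_one₀ (norm_nonneg q) hq two_ne_zero

lemma tsum_thetaTerm_sub_mul_thetaTerm_add (hq0 : q ≠ 0) (hq : ‖q‖ < 1) (hx : x ≠ 0)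
    (hy : y ≠ 0) :
    ∑' p : ℤ × ℤ, thetaTerm q x (p.1 - p.2) * thetaTerm q y (p.1 + p.2) =
      qTheta (q ^ 2) (-(x * y)) * qTheta (q ^ 2) (-(q * x⁻¹ * y)) := by
  rw [qTheta, qTheta, tsum_mul_tsum_of_summable_norm
    (summable_norm_thetaTerm (pow_ne_zero 2 hq0) (norm_pow_two_lt_one hq) (by simp [hx, hy]))
    (summable_norm_thetaTerm (pow_ne_zero 2 hq0) (norm_pow_two_lt_one hq) (by simp [hq0, hx, hy]))]
  exact tsum_congr fun p => thetaTerm_sub_mul_thetaTerm_add hq0 hx hy p.1 p.2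

theorem qTheta_mul_qTheta (hq0 : q ≠ 0) (hq : ‖q‖ < 1) (hx : x ≠ 0) (hy : y ≠ 0) :
    qTheta q x * qTheta q y =
      qTheta (q ^ 2) (-(x * y)) * qTheta (q ^ 2) (-(q * x⁻¹ * y)) -
        x * qTheta (q ^ 2) (-(x * y * q)) * qTheta (q ^ 2) (-(x⁻¹ * y)) := by
  have Sx := summable_norm_thetaTerm hq0 hq hx
  have Sy := summable_norm_thetaTerm hq0 hq hy
  have hS : Summable fun p : ℤ × ℤ => thetaTerm q x p.1 * thetaTerm q y p.2 :=
    summable_mul_of_summable_norm Sx Sy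
  have hodd (a b : ℤ) : thetaTerm q x (a - b + 1) * thetaTerm q y (a + b) =
      -x * (thetaTerm q (x * q) (a - b) * thetaTerm q y (a + b)) := by
    rw [add_comm _ (1 : ℤ), thetaTerm_add hq0 hx, thetaTerm_one, zpow_one]
    ring
  rw [qTheta, qTheta, tsum_mul_tsum_of_summable_norm Sx Sy,
    tsum_int_prod_eq_tsum_add_tsum_parity hS]
  simp only [hodd]
  rw [tsum_mul_left, tsum_thetaTerm_sub_mul_thetaTerm_add hq0 hq hx hy,
    tsum_thetaTerm_sub_mul_thetaTerm_add hq0 hq (mul_ne_zero hx hq0) hy,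
    show x * q * y = x * y * q by ring, show q * (x * q)⁻¹ * y = x⁻¹ * y by field_simp]
  ring

end Splitting

theorem jP_splitting (q x y : ℂ) (hq0 : q ≠ 0) (hq : ‖q‖ < 1)
    (hx : x ≠ 0) (hy : y ≠ 0) :
    jP x q * jP y q =
      jP (-(x * y)) (q ^ 2) * jP (-(q * x⁻¹ * y)) (q ^ 2) -
        x * jP (-(x * y * q)) (q ^ 2) * jP (-(x⁻¹ * y)) (q ^ 2) := by
  have hq2 := norm_pow_two_lt_one hq
  have hq20 : q ^ 2 ≠ 0 := pow_ne_zero 2 hq0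
  rw [jP_eq_qTheta hq0 hq hx, jP_eq_qTheta hq0 hq hy, jP_eq_qTheta hq20 hq2 (by simp [hx, hy]),
    jP_eq_qTheta hq20 hq2 (by simp [hq0, hx, hy]), jP_eq_qTheta hq20 hq2 (by simp [hq0, hx, hy]),
    jP_eq_qTheta hq20 hq2 (by simp [hx, hy])]
  exact qTheta_mul_qTheta hq0 hq hx hy
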